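/- Fix positive integers w₁, w₂ (weights). For a formal power series F ∈ ℂ[[x, y]] (formal power series in two variables over ℂ), define its weighted order w(F) := inf{ w₁·a + w₂·b : the coefficient of x^a y^b in F is nonzero } ∈ ℕ ∪ {∞}. Let u ∈ ℂ[[x, y]] be a unit (equivalently, its constant coefficient is nonzero), let f ∈ ℂ[[x, y]], and let g ∈ ℂ[[x, y]] be obtained from f by substituting u·x for the first variable and y for the second variable (this substitution is well defined since u·x and y have zero constant term). Then the weighted order of u·x equals w₁, and w(g) = w(f). (Lemma A.3 of the paper on invariance of weighted order under a unit change of coordinate.) -/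

import Mathlib

/-! Substituting `u·x` for `x` turns `x^a y^b` into `u^a x^a y^b`, which involves only monomials
divisible by `x^a y^b`; as weights grow under divisibility, `w(g) ≥ w(f)`. Conversely, take a
monomial of `f` of minimal weight that is also minimal for divisibility among the monomials of `f`:
no other monomial of `f` contributes to it in `g`, so it survives there with its coefficient
multiplied by `u(0)^a ≠ 0`. -/

open MvPowerSeries

/-- The weighted order of a formal power series `F ∈ ℂ[[x, y]]` with respect to weights
`w₁, w₂`: the infimum of `w₁·a + w₂·b` over monomials `x^a y^b` with nonzero coefficient
(with value `⊤` for `F = 0`). -/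
noncomputable def weightedOrder (w₁ w₂ : ℕ) (F : MvPowerSeries (Fin 2) ℂ) : ℕ∞ :=
  ⨅ (d : Fin 2 →₀ ℕ) (_ : MvPowerSeries.coeff d F ≠ 0),
    ((w₁ * d 0 + w₂ * d 1 : ℕ) : ℕ∞)

theorem Finsupp.weight_mono {σ : Type*} (w : σ → ℕ) {d e : σ →₀ ℕ} (h : d ≤ e) :
    weight w d ≤ weight w e := by
  obtain ⟨c, rfl⟩ := exists_add_of_le h
  simp only [map_add, le_add_iff_nonneg_right, zero_le]

namespace MvPowerSeries

open Finsupp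

variable {σ R : Type*} [Semiring R] (w : σ → ℕ)

theorem weightedOrder_eq_iInf (f : MvPowerSeries σ R) :
    f.weightedOrder w = ⨅ (d : σ →₀ ℕ) (_ : coeff d f ≠ 0), (weight w d : ℕ∞) :=
  le_antisymm (le_iInf₂ fun _ hd ↦ weightedOrder_le w hd)
    (le_weightedOrder w fun d hlt ↦ by_contra fun hd ↦ hlt.not_ge (iInf₂_le d hd))

theorem weightedOrder_X [Nontrivial R] (i : σ) :
    (X i : MvPowerSeries σ R).weightedOrder w = w i := by
  rw [X, weightedOrder_monomial_of_ne_zero w one_ne_zero, weight_single, one_smul]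

theorem weightedOrder_eq_zero_of_constantCoeff_ne_zero {u : MvPowerSeries σ R}
    (hu : constantCoeff u ≠ 0) : u.weightedOrder w = 0 :=
  nonpos_iff_eq_zero.mp <| by
    simpa using weightedOrder_le w (d := 0) (by rwa [coeff_zero_eq_constantCoeff_apply])

theorem exists_minimal_coeff_ne_zero_and_weightedOrder {f : MvPowerSeries σ R}
    (hf : f ≠ 0) :
    ∃ e, coeff e f ≠ 0 ∧ weight w e = f.weightedOrder w ∧ ∀ d < e, coeff d f = 0 := by
  obtain ⟨e, he⟩ := exists_minimal_of_wellFoundedLT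
    (fun d ↦ coeff d f ≠ 0 ∧ (weight w d : ℕ∞) = f.weightedOrder w)
    (exists_coeff_ne_zero_and_weightedOrder w ((ne_zero_iff_weightedOrder_finite w).mp hf))
  refine ⟨e, he.prop.1, he.prop.2, fun d hde ↦ by_contra fun hd ↦ ?_⟩
  have hwd : (weight w d : ℕ∞) ≤ weight w e := by exact_mod_cast weight_mono w hde.le
  exact he.not_prop_of_lt hde ⟨hd, le_antisymm (he.prop.2 ▸ hwd) (weightedOrder_le w hd)⟩

variable [DecidableEq σ] {f g : MvPowerSeries σ R} {v : (σ →₀ ℕ) → MvPowerSeries σ R}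

theorem weightedOrder_le_of_coeff_eq_sum_Iic
    (hg : ∀ e, coeff e g = ∑ d ∈ Finset.Iic e, coeff d f * coeff (e - d) (v d)) :
    f.weightedOrder w ≤ g.weightedOrder w := by
  refine le_weightedOrder w fun e he ↦ ?_
  rw [hg e]
  refine Finset.sum_eq_zero fun d hd ↦ ?_
  rw [coeff_eq_zero_of_lt_weightedOrder w, zero_mul]
  exact lt_of_le_of_lt (by exact_mod_cast weight_mono w (Finset.mem_Iic.mp hd)) he

theorem coeff_eq_mul_constantCoeff_of_coeff_eq_sum_Iic
    (hg : ∀ e, coeff e g = ∑ d ∈ Finset.Iic e, coeff d f * coeff (e - d) (v d))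
    {e : σ →₀ ℕ} (he : ∀ d < e, coeff d f = 0) :
    coeff e g = coeff e f * constantCoeff (v e) := by
  rw [hg e, Finset.sum_eq_single_of_mem e (Finset.mem_Iic.mpr le_rfl), tsub_self,
    coeff_zero_eq_constantCoeff_apply]
  intro d hd hde
  rw [he d (lt_of_le_of_ne (Finset.mem_Iic.mp hd) hde), zero_mul]

theorem weightedOrder_eq_of_coeff_eq_sum_Iic [NoZeroDivisors R]
    (hv : ∀ d, constantCoeff (v d) ≠ 0)
    (hg : ∀ e, coeff e g = ∑ d ∈ Finset.Iic e, coeff d f * coeff (e - d) (v d)) :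
    g.weightedOrder w = f.weightedOrder w := by
  refine le_antisymm ?_ (weightedOrder_le_of_coeff_eq_sum_Iic w hg)
  rcases eq_or_ne f 0 with rfl | hf
  · simp
  obtain ⟨e, hfe, hwe, hmin⟩ := exists_minimal_coeff_ne_zero_and_weightedOrder w hf
  have hge : coeff e g ≠ 0 := by
    rw [coeff_eq_mul_constantCoeff_of_coeff_eq_sum_Iic hg hmin]
    exact mul_ne_zero hfe (hv e)
  exact hwe ▸ weightedOrder_le w hge

end MvPowerSeries

theorem weightedOrder_eq_mvPowerSeries_weightedOrder (w₁ w₂ : ℕ) (F : MvPowerSeries (Fin 2) ℂ) :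
    weightedOrder w₁ w₂ F = F.weightedOrder ![w₁, w₂] := by
  simp [MvPowerSeries.weightedOrder_eq_iInf, Finsupp.weight_eq_sum, _root_.weightedOrder,
    mul_comm]

theorem weightedOrder_invariant_under_unit_coordinate_change_general
    (w₁ w₂ : ℕ)
    (u f g : MvPowerSeries (Fin 2) ℂ)
    (hu : MvPowerSeries.constantCoeff u ≠ 0)
    (hg : ∀ e : Fin 2 →₀ ℕ, MvPowerSeries.coeff e g =
      ∑ d ∈ Finset.Iic e,
        MvPowerSeries.coeff d f * MvPowerSeries.coeff (e - d) (u ^ (d 0))) :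
    weightedOrder w₁ w₂ (u * MvPowerSeries.X 0) = (w₁ : ℕ∞) ∧
      weightedOrder w₁ w₂ g = weightedOrder w₁ w₂ f := by
  simp only [weightedOrder_eq_mvPowerSeries_weightedOrder]
  have hv : ∀ d : Fin 2 →₀ ℕ, constantCoeff (u ^ d 0) ≠ 0 := fun _ ↦ by
    simpa using pow_ne_zero _ hu
  refine ⟨?_, weightedOrder_eq_of_coeff_eq_sum_Iic _ hv hg⟩
  rw [weightedOrder_mul, weightedOrder_eq_zero_of_constantCoeff_ne_zero _ hu, weightedOrder_X]
  simp

/-- Lemma A.3: if `u ∈ ℂ[[x, y]]` is a unit and `g(x, y) = f(u·x, y)`, then the weighted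
order of `u·x` is `w₁` and `w(g) = w(f)`. Here `g` is characterized coefficientwise:
`g = Σ_d (coeff_d f)·u^{d₀}·x^{d₀}·y^{d₁}`, i.e.
`coeff_e g = Σ_{d ≤ e} (coeff_d f)·(coeff_{e-d} (u^{d₀}))`. -/
theorem weightedOrder_invariant_under_unit_coordinate_change
    (w₁ w₂ : ℕ) (hw₁ : 0 < w₁) (hw₂ : 0 < w₂)
    (u f g : MvPowerSeries (Fin 2) ℂ)
    (hu : MvPowerSeries.constantCoeff u ≠ 0)
    (hg : ∀ e : Fin 2 →₀ ℕ, MvPowerSeries.coeff e g =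
      ∑ d ∈ Finset.Iic e,
        MvPowerSeries.coeff d f * MvPowerSeries.coeff (e - d) (u ^ (d 0))) :
    weightedOrder w₁ w₂ (u * MvPowerSeries.X 0) = (w₁ : ℕ∞) ∧
      weightedOrder w₁ w₂ g = weightedOrder w₁ w₂ f :=
  weightedOrder_invariant_under_unit_coordinate_change_general w₁ w₂ u f g hu hg
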